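/- (Change-of-measure lower bound on error probabilities.) Let Ω be a finite set, and let P and Q be PMFs on Ω such that P(ω) > 0 whenever Q(ω) > 0. Define the log-likelihood ratio L(ω) := log(Q(ω)/P(ω)) on the support of Q, and let E_Q[L] := Σ_{ω: Q(ω)>0} Q(ω)·L(ω) and Var_Q[L] := Σ_{ω: Q(ω)>0} Q(ω)·L(ω)² − (E_Q[L])². Then for every event ξ ⊆ Ω and every α ∈ (0,1] with Q(ξ) ≥ α: P(ξ) ≥ (α/2)·exp( −E_Q[L] − √(2·Var_Q[L]/α) ). -/

import Mathlib

open Finset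

/-- `μ` is a probability mass function on the finite type `Ω`. -/
def IsPMF {Ω : Type*} [Fintype Ω] (μ : Ω → ℝ) : Prop :=
  (∀ ω, 0 ≤ μ ω) ∧ ∑ ω, μ ω = 1

/-- **Change-of-measure lower bound on error probabilities.**
`EL` and `VarL` are the mean and variance under `Q` of the log-likelihood ratio
`L(ω) = log(Q(ω)/P(ω))`, computed over the support of `Q`. -/
theorem change_of_measure_lower_bound
    {Ω : Type*} [Fintype Ω]
    (P Q : Ω → ℝ) (hP : IsPMF P) (hQ : IsPMF Q)
    (habs : ∀ ω, 0 < Q ω → 0 < P ω)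
    (EL VarL : ℝ)
    (hEL : EL = ∑ ω ∈ Finset.univ.filter (fun ω => 0 < Q ω),
      Q ω * Real.log (Q ω / P ω))
    (hVarL : VarL = (∑ ω ∈ Finset.univ.filter (fun ω => 0 < Q ω),
      Q ω * (Real.log (Q ω / P ω)) ^ 2) - EL ^ 2) :
    ∀ (ξ : Finset Ω) (α : ℝ), 0 < α → α ≤ 1 → α ≤ ∑ ω ∈ ξ, Q ω →
      α / 2 * Real.exp (-EL - Real.sqrt (2 * VarL / α)) ≤ ∑ ω ∈ ξ, P ω := by
  classical
  intro ξ α hα hα1 hαQ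
  set S : Finset Ω := Finset.univ.filter (fun ω => 0 < Q ω) with hS
  set s : ℝ := Real.sqrt (2 * VarL / α) with hs
  set t : ℝ := EL + s with ht
  have hQ0 : ∀ ω, ω ∉ S → Q ω = 0 := by
    intro ω hω
    simp only [hS, Finset.mem_filter, Finset.mem_univ, true_and, not_lt] at hω
    exact le_antisymm hω (hQ.1 ω)
  have hQsum : ∑ ω ∈ S, Q ω = 1 := by
    rw [← hQ.2]
    exact Finset.sum_subset (Finset.subset_univ S) (fun ω _ h => hQ0 ω h)
  have hVar' : ∑ ω ∈ S, Q ω * (Real.log (Q ω / P ω) - EL) ^ 2 = VarL := by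
    have hterm : ∀ ω ∈ S, Q ω * (Real.log (Q ω / P ω) - EL) ^ 2
        = Q ω * (Real.log (Q ω / P ω)) ^ 2
          - 2 * EL * (Q ω * Real.log (Q ω / P ω)) + EL ^ 2 * Q ω := by
      intro ω _; ring
    rw [Finset.sum_congr rfl hterm]
    rw [Finset.sum_add_distrib, Finset.sum_sub_distrib, ← Finset.mul_sum,
      ← Finset.mul_sum, hQsum, ← hEL, hVarL]
    ring
  have hVarNN : 0 ≤ VarL := by
    rw [← hVar']
    exact Finset.sum_nonneg (fun ω _ => mul_nonneg (hQ.1 ω) (sq_nonneg _))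
  have hsNN : 0 ≤ s := Real.sqrt_nonneg _
  set Bad : Finset Ω := S.filter (fun ω => t < Real.log (Q ω / P ω)) with hBadDef
  have hBad : ∑ ω ∈ Bad, Q ω ≤ α / 2 := by
    rcases eq_or_lt_of_le hVarNN with hV0 | hVpos
    · -- variance zero: L = EL on support, Bad is empty
      have hzero : ∀ ω ∈ S, Q ω * (Real.log (Q ω / P ω) - EL) ^ 2 = 0 := by
        rw [← Finset.sum_eq_zero_iff_of_nonneg
          (fun ω _ => mul_nonneg (hQ.1 ω) (sq_nonneg _))]
        rw [hVar', ← hV0]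
      have hBadEmpty : Bad = ∅ := by
        ext ω
        simp only [hBadDef, Finset.mem_filter, Finset.notMem_empty, iff_false,
          not_and]
        intro hωS hlt
        have hQpos : 0 < Q ω := by
          simpa [hS] using hωS
        have := hzero ω hωS
        have h2 : (Real.log (Q ω / P ω) - EL) ^ 2 = 0 := by
          rcases mul_eq_zero.mp this with h | h
          · exact absurd h (ne_of_gt hQpos)
          · exact h
        have h3 : Real.log (Q ω / P ω) = EL := by
          have := pow_eq_zero_iff (n := 2) (by norm_num) |>.mp h2
          linarith
        rw [h3] at hlt
        linarith
      rw [hBadEmpty]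
      simp
      positivity
    · have hspos : 0 < s := Real.sqrt_pos.mpr (by positivity)
      have hs2 : s ^ 2 = 2 * VarL / α := Real.sq_sqrt (by positivity)
      have step1 : ∑ ω ∈ Bad, Q ω
          ≤ ∑ ω ∈ Bad, Q ω * (Real.log (Q ω / P ω) - EL) ^ 2 / s ^ 2 := by
        apply Finset.sum_le_sum
        intro ω hω
        simp only [hBadDef, Finset.mem_filter] at hω
        have hQpos : 0 < Q ω := by simpa [hS] using hω.1
        have hgt : s < Real.log (Q ω / P ω) - EL := by
          have := hω.2; rw [ht] at this; linarith
        have hsq : s ^ 2 ≤ (Real.log (Q ω / P ω) - EL) ^ 2 := by nlinarith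
        rw [le_div_iff₀ (by positivity)]
        nlinarith
      have step2 : ∑ ω ∈ Bad, Q ω * (Real.log (Q ω / P ω) - EL) ^ 2 / s ^ 2
          ≤ ∑ ω ∈ S, Q ω * (Real.log (Q ω / P ω) - EL) ^ 2 / s ^ 2 := by
        apply Finset.sum_le_sum_of_subset_of_nonneg (Finset.filter_subset _ _)
        intro ω _ _
        exact div_nonneg (mul_nonneg (hQ.1 ω) (sq_nonneg _)) (sq_nonneg _)
      have step3 : ∑ ω ∈ S, Q ω * (Real.log (Q ω / P ω) - EL) ^ 2 / s ^ 2
          = α / 2 := by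
        rw [← Finset.sum_div, hVar', hs2]
        field_simp
      linarith
  -- the good set inside ξ
  set Good : Finset Ω := ξ.filter (fun ω => 0 < Q ω ∧ Real.log (Q ω / P ω) ≤ t)
    with hGoodDef
  have hGoodQ : α / 2 ≤ ∑ ω ∈ Good, Q ω := by
    have hsplit := Finset.sum_filter_add_sum_filter_not ξ
      (fun ω => 0 < Q ω ∧ Real.log (Q ω / P ω) ≤ t) Q
    set T : Finset Ω := ξ.filter
      (fun ω => ¬(0 < Q ω ∧ Real.log (Q ω / P ω) ≤ t)) with hTDef
    have hT : ∑ ω ∈ T, Q ω ≤ ∑ ω ∈ Bad, Q ω := by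
      have h1 : ∑ ω ∈ T.filter (fun ω => 0 < Q ω), Q ω = ∑ ω ∈ T, Q ω := by
        apply Finset.sum_subset (Finset.filter_subset _ _)
        intro ω hωT hω
        simp only [Finset.mem_filter, hωT, true_and] at hω
        exact le_antisymm (not_lt.mp hω) (hQ.1 ω)
      rw [← h1]
      apply Finset.sum_le_sum_of_subset_of_nonneg
      · intro ω hω
        simp only [hTDef, Finset.mem_filter, not_and, not_le] at hω
        obtain ⟨⟨hωξ, himp⟩, hQpos⟩ := hω
        simp only [hBadDef, hS, Finset.mem_filter, Finset.mem_univ, true_and]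
        exact ⟨hQpos, himp hQpos⟩
      · intro ω _ _; exact hQ.1 ω
    have : α ≤ ∑ ω ∈ Good, Q ω + ∑ ω ∈ T, Q ω := by
      rw [hGoodDef, hTDef]
      calc α ≤ ∑ ω ∈ ξ, Q ω := hαQ
        _ = _ := hsplit.symm
    linarith
  have hPpt : ∀ ω ∈ Good, Q ω * Real.exp (-t) ≤ P ω := by
    intro ω hω
    simp only [hGoodDef, Finset.mem_filter] at hω
    obtain ⟨hωξ, hQpos, hLle⟩ := hω
    have hPpos : 0 < P ω := habs ω hQpos
    have h2 : Q ω / P ω ≤ Real.exp t :=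
      (Real.log_le_iff_le_exp (by positivity)).mp hLle
    rw [div_le_iff₀ hPpos] at h2
    have hexp : (0:ℝ) < Real.exp (-t) := Real.exp_pos _
    calc Q ω * Real.exp (-t) ≤ (Real.exp t * P ω) * Real.exp (-t) := by
          nlinarith
      _ = P ω := by
          rw [Real.exp_neg]; field_simp
  have hfinal : α / 2 * Real.exp (-t) ≤ ∑ ω ∈ ξ, P ω := by
    calc α / 2 * Real.exp (-t)
        ≤ (∑ ω ∈ Good, Q ω) * Real.exp (-t) := by
          apply mul_le_mul_of_nonneg_right hGoodQ (Real.exp_pos _).le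
      _ = ∑ ω ∈ Good, Q ω * Real.exp (-t) := by rw [Finset.sum_mul]
      _ ≤ ∑ ω ∈ Good, P ω := Finset.sum_le_sum hPpt
      _ ≤ ∑ ω ∈ ξ, P ω := by
          apply Finset.sum_le_sum_of_subset_of_nonneg (Finset.filter_subset _ _)
          intro ω _ _
          exact hP.1 ω
  have : -EL - s = -t := by rw [ht]; ring
  rw [this]
  exact hfinal
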